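/- For an integer N ≥ 3, let V_N and E_N denote the number of vertices and edges of the Platonic graph Π_N, and let g_N = 1 + E_N/6 − V_N/2 be the genus of the compact surface S(Π_N) triangulated by Π_N (computed via the Euler formula, since Π_N triangulates S(Π_N) with 2·E_N/3 triangular faces). Then the ratio 6·g_N / E_N tends to 1 as N tends to infinity. -/

import Mathlib

/-- Pairs `(λ, μ) ∈ (ℤ/N)²` with `gcd(λ, μ, N) = 1`. -/
abbrev PlatonicPair (N : ℕ) : Type :=
  {x : ZMod N × ZMod N // Nat.gcd (Nat.gcd x.1.val x.2.val) N = 1}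

/-- Identify `(λ,μ)` with `(-λ,-μ)`. -/
instance platonicSetoid (N : ℕ) : Setoid (PlatonicPair N) where
  r x y := y.val = x.val ∨ y.val = -x.val
  iseqv := by
    refine ⟨fun _ => Or.inl rfl, ?_, ?_⟩
    · rintro x y (h | h)
      · exact Or.inl h.symm
      · right; rw [h, neg_neg]
    · rintro x y z (h1 | h1) (h2 | h2)
      · exact Or.inl (h2.trans h1)
      · right; rw [h2, h1]
      · right; rw [h2, h1]
      · left; rw [h2, h1, neg_neg]

/-- Vertices of the Platonic graph: classes `[λ,μ] = {(λ,μ), (-λ,-μ)}`. -/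
abbrev PlatonicVertex (N : ℕ) : Type := Quotient (platonicSetoid N)

/-- The Platonic graph `Π_N`: distinct classes `[λ,μ]`, `[ν,ω]` are adjacent
iff `λω - μν = ±1` in `ℤ/N`. -/
def Platonic (N : ℕ) : SimpleGraph (PlatonicVertex N) where
  Adj a b := a ≠ b ∧ ∃ x y : PlatonicPair N, ⟦x⟧ = a ∧ ⟦y⟧ = b ∧
    (x.val.1 * y.val.2 - x.val.2 * y.val.1 = 1 ∨
     x.val.1 * y.val.2 - x.val.2 * y.val.1 = -1)
  symm := ⟨by
    rintro a b ⟨hne, x, y, hx, hy, hdet⟩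
    refine ⟨hne.symm, y, x, hy, hx, ?_⟩
    rcases hdet with h | h
    · right; linear_combination -h
    · left; linear_combination -h⟩
  loopless := ⟨fun a h => h.1 rfl⟩

instance platonicDecRel (N : ℕ) :
    DecidableRel (α := PlatonicPair N) (· ≈ ·) := fun x y =>
  inferInstanceAs (Decidable (y.val = x.val ∨ y.val = -x.val))

instance (N : ℕ) : DecidableEq (PlatonicVertex N) :=
  @Quotient.decidableEq _ _ (platonicDecRel N)

instance (N : ℕ) [NeZero N] : Fintype (PlatonicVertex N) :=
  Quotient.fintype _

instance platonicAdjDec (N : ℕ) [NeZero N] : DecidableRel (Platonic N).Adj := fun a b =>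
  inferInstanceAs (Decidable (a ≠ b ∧ ∃ x y : PlatonicPair N, ⟦x⟧ = a ∧ ⟦y⟧ = b ∧
    (x.val.1 * y.val.2 - x.val.2 * y.val.1 = 1 ∨
     x.val.1 * y.val.2 - x.val.2 * y.val.1 = -1)))

/-- The class of `(λ,μ)` has nonvanishing second coordinate. -/
def secondNZ (N : ℕ) (v : PlatonicVertex N) : Prop :=
  ∀ x : PlatonicPair N, ⟦x⟧ = v → x.val.2 ≠ 0

instance (N : ℕ) [NeZero N] : DecidablePred (secondNZ N) := fun _ =>
  Fintype.decidableForallFintype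

/-- The modified Platonic graph `Π_p'`: induced subgraph of `Π_p` on the classes
`[λ,μ]` with `μ ≠ 0`. -/
def ModPlatonic (N : ℕ) : SimpleGraph {v : PlatonicVertex N | secondNZ N v} :=
  SimpleGraph.induce {v : PlatonicVertex N | secondNZ N v} (Platonic N)

instance (N : ℕ) [NeZero N] : DecidableRel (ModPlatonic N).Adj := fun a b =>
  inferInstanceAs (Decidable ((Platonic N).Adj a b))

/-!
Every vertex `[x]` of `Π_N` has exactly `N` neighbours: a neighbour has a unique representative
`v` with `λω - μν = 1` (unique because `-1 ≠ 1` for `N ≥ 3`), and since `x` is unimodular these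
`v` form an affine line over `ℤ/N`. Hence `Π_N` is `N`-regular, `2E = NV`, and
`6g/E = 1 + 6/E - 6/N`, which tends to `1` because `E ≥ N/2`.
-/

open Filter Topology

section PairDet

variable {R : Type*} [CommRing R]

def pairDet (u v : R × R) : R := u.1 * v.2 - u.2 * v.1

@[simp]
lemma pairDet_neg_left (u v : R × R) : pairDet (-u) v = -pairDet u v := by
  simp only [pairDet, Prod.fst_neg, Prod.snd_neg]; ring

@[simp]
lemma pairDet_neg_right (u v : R × R) : pairDet u (-v) = -pairDet u v := by
  simp only [pairDet, Prod.fst_neg, Prod.snd_neg]; ring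

@[simp]
lemma pairDet_self (u : R × R) : pairDet u u = 0 := by
  simp only [pairDet]; ring

lemma isCoprime_of_pairDet_eq_one {u v : R × R} (h : pairDet u v = 1) : IsCoprime v.1 v.2 :=
  ⟨-u.2, u.1, by rw [← h, pairDet]; ring⟩

/-- The solutions `v` of `pairDet u v = 1` form the affine line `v₀ + R • u`. -/
lemma card_pairDet_eq_one {u : R × R} (hu : IsCoprime u.1 u.2) :
    Nat.card {v : R × R // pairDet u v = 1} = Nat.card R := by
  obtain ⟨a, b, hab⟩ := hu
  refine Nat.card_congr
    { toFun := fun v => a * v.1.1 + b * v.1.2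
      invFun := fun t =>
        ⟨(-b + t * u.1, a + t * u.2), by simp only [pairDet]; linear_combination hab⟩
      left_inv := fun ⟨v, hv⟩ => ?_
      right_inv := fun t => by linear_combination t * hab }
  simp only [pairDet] at hv
  ext
  · linear_combination b * hv + v.1 * hab
  · linear_combination -a * hv + v.2 * hab

end PairDet

lemma ZMod.gcd_gcd_val_eq_one_iff_isCoprime {N : ℕ} [NeZero N] (a b : ZMod N) :
    Nat.gcd (Nat.gcd a.val b.val) N = 1 ↔ IsCoprime a b := by
  set d := Nat.gcd a.val b.val
  constructor
  · intro hd
    have hab :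
        (d : ZMod N) = a * (Nat.gcdA a.val b.val : ℤ) + b * (Nat.gcdB a.val b.val : ℤ) := by
      have := congrArg (fun z : ℤ => (z : ZMod N)) (Nat.gcd_eq_gcd_ab a.val b.val)
      push_cast [ZMod.natCast_zmod_val] at this
      exact this
    refine ⟨(d : ZMod N)⁻¹ * (Nat.gcdA a.val b.val : ℤ),
      (d : ZMod N)⁻¹ * (Nat.gcdB a.val b.val : ℤ), ?_⟩
    rw [← ZMod.coe_mul_inv_eq_one d hd, hab]
    ring
  · intro hab
    set e := Nat.gcd d N
    have hdvd (c : ZMod N) (hc : e ∣ c.val) :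
        ZMod.castHom (Nat.gcd_dvd_right d N) (ZMod e) c = 0 := by
      rw [ZMod.castHom_apply, ZMod.cast_eq_val, ZMod.natCast_eq_zero_iff]
      exact hc
    have h := hab.map (ZMod.castHom (Nat.gcd_dvd_right d N) (ZMod e))
    rw [hdvd a ((Nat.gcd_dvd_left _ _).trans (Nat.gcd_dvd_left _ _)),
      hdvd b ((Nat.gcd_dvd_left _ _).trans (Nat.gcd_dvd_right _ _)),
      isCoprime_zero_left, isUnit_zero_iff] at h
    exact ZMod.subsingleton_iff.mp (subsingleton_of_zero_eq_one h)

lemma SimpleGraph.IsRegularOfDegree.card_mul_eq_two_mul_card_edgeSet {V : Type*} [Fintype V]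
    {G : SimpleGraph V} [DecidableRel G.Adj] {d : ℕ} (h : G.IsRegularOfDegree d) :
    Nat.card V * d = 2 * Nat.card G.edgeSet := by
  rw [Nat.card_eq_fintype_card, Nat.card_eq_fintype_card, ← SimpleGraph.edgeFinset_card,
    ← G.sum_degrees_eq_twice_card_edges, Finset.sum_congr rfl fun v _ => h.degree_eq v,
    Finset.sum_const, smul_eq_mul, Finset.card_univ]

lemma tendsto_six_mul_genus_div {V E : ℕ → ℝ} (hV : ∀ᶠ n in atTop, 1 ≤ V n)
    (hVE : ∀ᶠ n in atTop, 2 * E n = V n * n) :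
    Tendsto (fun n => 6 * (1 + E n / 6 - V n / 2) / E n) atTop (𝓝 1) := by
  have hE : Tendsto E atTop atTop := by
    refine tendsto_atTop_mono' atTop ?_
      ((tendsto_natCast_atTop_atTop (R := ℝ)).atTop_div_const (by norm_num : (0 : ℝ) < 2))
    filter_upwards [hV, hVE] with n h1 h2
    nlinarith [(n.cast_nonneg : (0 : ℝ) ≤ n)]
  have hlim : Tendsto (fun n : ℕ => 1 + 6 / E n - 6 / n) atTop (𝓝 1) := by
    simpa using (tendsto_const_nhds.add (tendsto_const_nhds.div_atTop hE)).sub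
      (tendsto_const_div_atTop_nhds_zero_nat 6)
  refine hlim.congr' ?_
  filter_upwards [hVE, hE.eventually_gt_atTop 0, eventually_gt_atTop 0] with n h hE0 hn
  have hn' : (0 : ℝ) < n := Nat.cast_pos.mpr hn
  field_simp
  linear_combination -6 * h

section Platonic

variable {N : ℕ}

lemma platonicVertex_mk_eq_mk_iff (x y : PlatonicPair N) :
    (⟦x⟧ : PlatonicVertex N) = ⟦y⟧ ↔ y.val = x.val ∨ y.val = -x.val :=
  Quotient.eq

lemma pairDet_eq_or_eq_neg_of_mk_eq {x x' y y' : PlatonicPair N}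
    (hx : (⟦x⟧ : PlatonicVertex N) = ⟦x'⟧) (hy : (⟦y⟧ : PlatonicVertex N) = ⟦y'⟧) :
    pairDet x'.val y'.val = pairDet x.val y.val ∨
      pairDet x'.val y'.val = -pairDet x.val y.val := by
  rcases (platonicVertex_mk_eq_mk_iff x x').mp hx with hx | hx <;>
    rcases (platonicVertex_mk_eq_mk_iff y y').mp hy with hy | hy <;> simp [hx, hy]

lemma platonic_adj_mk_iff (hN : 1 < N) (x y : PlatonicPair N) :
    (Platonic N).Adj ⟦x⟧ ⟦y⟧ ↔ pairDet x.val y.val = 1 ∨ pairDet x.val y.val = -1 := by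
  have : Fact (1 < N) := ⟨hN⟩
  constructor
  · rintro ⟨-, x', y', hx, hy, hdet⟩
    change pairDet x'.val y'.val = 1 ∨ pairDet x'.val y'.val = -1 at hdet
    rcases pairDet_eq_or_eq_neg_of_mk_eq hx.symm hy.symm with h | h <;> rw [h] at hdet
    · exact hdet
    · rw [neg_eq_iff_eq_neg, neg_eq_iff_eq_neg, neg_neg] at hdet
      exact hdet.symm
  · intro hdet
    refine ⟨fun hxy => ?_, x, y, rfl, rfl, hdet⟩
    rcases (platonicVertex_mk_eq_mk_iff x y).mp hxy with h | h <;> simp [h] at hdet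

variable [NeZero N]

lemma PlatonicPair.isCoprime (x : PlatonicPair N) : IsCoprime x.val.1 x.val.2 :=
  (ZMod.gcd_gcd_val_eq_one_iff_isCoprime _ _).mp x.2

instance : Nonempty (PlatonicVertex N) :=
  ⟨⟦⟨(0, 1), (ZMod.gcd_gcd_val_eq_one_iff_isCoprime _ _).mpr isCoprime_one_right⟩⟧⟩

def platonicNeighbor (x : PlatonicPair N) (v : {v : ZMod N × ZMod N // pairDet x.val v = 1}) :
    PlatonicVertex N :=
  ⟦⟨v.val, (ZMod.gcd_gcd_val_eq_one_iff_isCoprime _ _).mpr (isCoprime_of_pairDet_eq_one v.2)⟩⟧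

lemma platonicNeighbor_injective (hN : 2 < N) (x : PlatonicPair N) :
    Function.Injective (platonicNeighbor x) := by
  have : Fact (2 < N) := ⟨hN⟩
  rintro ⟨v, hv⟩ ⟨w, hw⟩ h
  rcases (platonicVertex_mk_eq_mk_iff _ _).mp h with h | h
  · exact Subtype.ext h.symm
  · have hw' : pairDet x.val w = -1 := by rw [show w = -v from h, pairDet_neg_right, hv]
    exact absurd (hw'.symm.trans hw) ZMod.neg_one_ne_one

lemma range_platonicNeighbor (hN : 1 < N) (x : PlatonicPair N) :
    Set.range (platonicNeighbor x) = (Platonic N).neighborSet ⟦x⟧ := by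
  ext w
  induction w using Quotient.inductionOn with | h y => ?_
  rw [SimpleGraph.mem_neighborSet, platonic_adj_mk_iff hN]
  constructor
  · rintro ⟨⟨v, hv⟩, h⟩
    rcases pairDet_eq_or_eq_neg_of_mk_eq rfl h with h | h <;> rw [h, hv] <;> simp
  · rintro (h | h)
    · exact ⟨⟨y.val, h⟩, rfl⟩
    · exact ⟨⟨-y.val, by rw [pairDet_neg_right, h, neg_neg]⟩,
        (platonicVertex_mk_eq_mk_iff _ _).mpr (Or.inr (neg_neg _).symm)⟩

lemma platonic_isRegularOfDegree (hN : 2 < N) : (Platonic N).IsRegularOfDegree N := by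
  intro w
  induction w using Quotient.inductionOn with | h x => ?_
  rw [← SimpleGraph.card_neighborSet_eq_degree, ← Nat.card_eq_fintype_card,
    ← range_platonicNeighbor (by omega) x,
    Nat.card_range_of_injective (platonicNeighbor_injective hN x),
    card_pairDet_eq_one x.isCoprime, Nat.card_zmod]

end Platonic

/-- Non-flatness of the triangulations by Platonic graphs: with `V_N`, `E_N` the
numbers of vertices and edges of `Π_N` and `g_N = 1 + E_N/6 - V_N/2` the genus of the
compact surface triangulated by `Π_N`, the ratio `6 g_N / E_N` tends to `1` as
`N → ∞`. -/
theorem platonic_nonflatness :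
    Filter.Tendsto
      (fun N : ℕ =>
        6 * (1 + (Nat.card (Platonic N).edgeSet : ℝ) / 6
              - (Nat.card (PlatonicVertex N) : ℝ) / 2) /
          (Nat.card (Platonic N).edgeSet : ℝ))
      Filter.atTop (nhds 1) := by
  refine tendsto_six_mul_genus_div ?_ ?_
  · filter_upwards [eventually_gt_atTop 0] with N hN
    have : NeZero N := ⟨hN.ne'⟩
    exact_mod_cast Nat.one_le_iff_ne_zero.mpr Nat.card_pos.ne'
  · filter_upwards [eventually_gt_atTop 2] with N hN
    have : NeZero N := ⟨by omega⟩
    exact_mod_cast ((platonic_isRegularOfDegree hN).card_mul_eq_two_mul_card_edgeSet).symm
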